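/- Define Ψ_N^{1,+}(s) = Σ_{m=0}^N (iΩ)^m [(2N+1-m)!/(2N+1)!] P_m^{(N-m, N-m+1)}(s), where P_m^{(p,q)} is the Jacobi polynomial. Then the operator L^+(v) := -(iΩ/2)v + v' applied to Ψ_N^{1,+} gives L^+ Ψ_N^{1,+} = -((iΩ)^{N+1}/2)·[(N+1)!/(2N+1)!]·P_N^{(0,1)}(s). -/

import Mathlib

open Complex Finset

noncomputable def jacobiP (a b n : ℕ) (s : ℂ) : ℂ :=
  ∑ j ∈ Finset.range (n + 1),
    (Nat.choose (n + a) (n - j) : ℂ) * (Nat.choose (n + b) j : ℂ) *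
      ((s - 1) / 2) ^ j * ((s + 1) / 2) ^ (n - j)

lemma key_nat (a b n k : ℕ) (hk : k ≤ n) :
    (n+1+a).choose (n-k) * (n+1+b).choose (k+1) * (k+1)
      + (n+1+a).choose (n+1-k) * (n+1+b).choose k * (n+1-k)
    = (n+a+b+2) * ((n+1+a).choose (n-k) * (n+1+b).choose k) := by
  have h1 : (n+1+b).choose (k+1) * (k+1) = (n+1+b).choose k * ((n-k)+b+1) := by
    rw [Nat.choose_succ_right_eq]; congr 1; omega
  have h2 : (n+1+a).choose ((n-k)+1) * ((n-k)+1) = (n+1+a).choose (n-k) * (a+k+1) := by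
    rw [Nat.choose_succ_right_eq]; congr 1; omega
  rw [show n+1-k = (n-k)+1 from by omega,
      show n+a+b+2 = ((n-k)+b+1) + (a+k+1) from by omega]
  calc (n+1+a).choose (n-k) * (n+1+b).choose (k+1) * (k+1)
        + (n+1+a).choose ((n-k)+1) * (n+1+b).choose k * ((n-k)+1)
      = (n+1+a).choose (n-k) * ((n+1+b).choose (k+1) * (k+1))
        + ((n+1+a).choose ((n-k)+1) * ((n-k)+1)) * (n+1+b).choose k := by ring
    _ = (n+1+a).choose (n-k) * ((n+1+b).choose k * ((n-k)+b+1))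
        + ((n+1+a).choose (n-k) * (a+k+1)) * (n+1+b).choose k := by rw [h1, h2]
    _ = (((n-k)+b+1) + (a+k+1)) * ((n+1+a).choose (n-k) * (n+1+b).choose k) := by ring

lemma jacobiP_hasDerivAt (a b n : ℕ) (s : ℂ) :
    HasDerivAt (fun t => jacobiP a b (n+1) t)
      (((n:ℂ)+a+b+2)/2 * jacobiP (a+1) (b+1) n s) s := by
  have hx : HasDerivAt (fun t : ℂ => (t-1)/2) (1/2) s := by
    simpa using ((hasDerivAt_id s).sub_const 1).div_const 2
  have hy : HasDerivAt (fun t : ℂ => (t+1)/2) (1/2) s := by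
    simpa using ((hasDerivAt_id s).add_const 1).div_const 2
  have H : HasDerivAt (fun t => jacobiP a b (n+1) t)
      (∑ j ∈ Finset.range (n+2),
        ((n+1+a).choose (n+1-j) : ℂ) * ((n+1+b).choose j : ℂ) *
          ((↑j * ((s-1)/2)^(j-1) * (1/2)) * ((s+1)/2)^(n+1-j)
            + ((s-1)/2)^j * (↑(n+1-j) * ((s+1)/2)^(n+1-j-1) * (1/2)))) s := by
    unfold jacobiP
    refine HasDerivAt.fun_sum fun j hj => ?_
    have h := ((hx.fun_pow j).fun_mul (hy.fun_pow (n+1-j))).const_mul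
        (((n+1+a).choose (n+1-j) : ℂ) * ((n+1+b).choose j : ℂ))
    convert h using 2
    · rfl
    · ring
  have hsum : (∑ j ∈ Finset.range (n+2),
        ((n+1+a).choose (n+1-j) : ℂ) * ((n+1+b).choose j : ℂ) *
          ((↑j * ((s-1)/2)^(j-1) * (1/2)) * ((s+1)/2)^(n+1-j)
            + ((s-1)/2)^j * (↑(n+1-j) * ((s+1)/2)^(n+1-j-1) * (1/2))))
      = ((n:ℂ)+a+b+2)/2 * jacobiP (a+1) (b+1) n s := by
    have split : (∑ j ∈ Finset.range (n+2),
        ((n+1+a).choose (n+1-j) : ℂ) * ((n+1+b).choose j : ℂ) *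
          ((↑j * ((s-1)/2)^(j-1) * (1/2)) * ((s+1)/2)^(n+1-j)
            + ((s-1)/2)^j * (↑(n+1-j) * ((s+1)/2)^(n+1-j-1) * (1/2))))
      = (∑ j ∈ Finset.range (n+2),
          ((n+1+a).choose (n+1-j) : ℂ) * ((n+1+b).choose j : ℂ) *
            ((↑j * ((s-1)/2)^(j-1) * (1/2)) * ((s+1)/2)^(n+1-j)))
        + (∑ j ∈ Finset.range (n+2),
          ((n+1+a).choose (n+1-j) : ℂ) * ((n+1+b).choose j : ℂ) *
            (((s-1)/2)^j * (↑(n+1-j) * ((s+1)/2)^(n+1-j-1) * (1/2)))) := by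
      rw [← Finset.sum_add_distrib]; exact Finset.sum_congr rfl fun j _ => by ring
    rw [split, Finset.sum_range_succ' _ (n+1), Finset.sum_range_succ _ (n+1)]
    simp only [Nat.cast_zero, Nat.sub_self, Nat.cast_ofNat, zero_mul, mul_zero, add_zero,
      Nat.cast_zero, zero_mul, mul_zero]
    unfold jacobiP
    rw [Finset.mul_sum, ← Finset.sum_add_distrib]
    refine Finset.sum_congr rfl fun k hk => ?_
    have hk' : k ≤ n := Nat.lt_succ_iff.mp (Finset.mem_range.mp hk)
    rw [show n+1-(k+1) = n-k from by omega, show n+1-k-1 = n-k from by omega,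
        show n+1-k = (n-k)+1 from by omega, show n+(a+1) = n+1+a from by omega,
        show n+(b+1) = n+1+b from by omega]
    rw [show k+1-1 = k from by omega]
    push_cast
    have key := key_nat a b n k hk'
    rw [show n+1-k = (n-k)+1 from by omega] at key
    have keyC := congrArg (fun m : ℕ => (m : ℂ)) key
    push_cast at keyC
    linear_combination (((s-1)/2)^k * ((s+1)/2)^(n-k) / 2) * keyC
  exact hsum ▸ H

noncomputable def Psi (N : ℕ) (Ω : ℂ) (s : ℂ) : ℂ :=
  ∑ m ∈ Finset.range (N + 1),
    (I * Ω) ^ m * ((Nat.factorial (2 * N + 1 - m) : ℂ) / (Nat.factorial (2 * N + 1) : ℂ)) *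
      jacobiP (N - m) (N - m + 1) m s

/-- `L⁺Ψ_N^{1,+} = -((iΩ)^{N+1}/2)·[(N+1)!/(2N+1)!]·P_N^{(0,1)}`,
where `L⁺(v) = -(iΩ/2)v + v'`. -/
theorem Lplus_Psi (N : ℕ) (Ω : ℂ) (s : ℂ) :
    -(I * Ω / 2) * Psi N Ω s + deriv (Psi N Ω) s
      = -((I * Ω) ^ (N + 1) / 2) *
          ((Nat.factorial (N + 1) : ℂ) / (Nat.factorial (2 * N + 1) : ℂ)) *
          jacobiP 0 1 N s := by
  set D : ℕ → ℂ := fun m => match m with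
    | 0 => 0
    | k+1 => ((k:ℂ) + ↑(N-(k+1)) + ↑(N-(k+1)+1) + 2)/2 *
        jacobiP (N-(k+1)+1) (N-(k+1)+1+1) k s with hDdef
  have hD : ∀ m ∈ Finset.range (N+1),
      HasDerivAt (fun t => jacobiP (N-m) (N-m+1) m t) (D m) s := by
    intro m _
    match m with
    | 0 =>
      have : (fun t : ℂ => jacobiP (N-0) (N-0+1) 0 t) = fun _ => (1:ℂ) := by
        funext t; simp [jacobiP]
      rw [this]
      exact hasDerivAt_const s 1
    | k+1 => exact jacobiP_hasDerivAt (N-(k+1)) (N-(k+1)+1) k s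
  have hP : HasDerivAt (Psi N Ω)
      (∑ m ∈ Finset.range (N+1),
        (I * Ω) ^ m * ((Nat.factorial (2 * N + 1 - m) : ℂ) / (Nat.factorial (2 * N + 1) : ℂ))
          * D m) s := by
    unfold Psi
    exact HasDerivAt.fun_sum fun m hm => (hD m hm).const_mul _
  rw [hP.deriv, Finset.sum_range_succ' _ N]
  unfold Psi
  rw [Finset.mul_sum, Finset.sum_range_succ _ N]
  have hz : ∑ k ∈ Finset.range N,
      (-(I * Ω / 2) * ((I * Ω) ^ k *
          ((Nat.factorial (2 * N + 1 - k) : ℂ) / (Nat.factorial (2 * N + 1) : ℂ)) *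
          jacobiP (N - k) (N - k + 1) k s)
        + (I * Ω) ^ (k+1) *
          ((Nat.factorial (2 * N + 1 - (k+1)) : ℂ) / (Nat.factorial (2 * N + 1) : ℂ)) *
          D (k+1)) = 0 := by
    refine Finset.sum_eq_zero fun k hk => ?_
    have hkN : k + 1 ≤ N := Finset.mem_range.mp hk
    rw [hDdef]
    simp only []
    rw [show N-(k+1)+1 = N-k from by omega]
    rw [Nat.cast_sub hkN, Nat.cast_sub (show k ≤ N by omega)]
    rw [show 2*N+1-(k+1) = 2*N-k from by omega]
    have hfac : ((Nat.factorial (2*N-k) : ℂ)) * (2*(N:ℂ) - k + 1)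
        = (Nat.factorial (2*N+1-k) : ℂ) := by
      rw [show 2*N+1-k = (2*N-k)+1 from by omega, Nat.factorial_succ]
      push_cast [Nat.cast_sub (show k ≤ 2*N by omega)]
      ring
    push_cast
    linear_combination ((I*Ω)^(k+1) * jacobiP (N-k) (N-k+1) k s /
        (2 * (Nat.factorial (2*N+1) : ℂ))) * hfac
  have hzz : (∑ k ∈ Finset.range N,
      -(I * Ω / 2) * ((I * Ω) ^ k *
          ((Nat.factorial (2 * N + 1 - k) : ℂ) / (Nat.factorial (2 * N + 1) : ℂ)) *
          jacobiP (N - k) (N - k + 1) k s))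
      + (∑ k ∈ Finset.range N, (I * Ω) ^ (k+1) *
          ((Nat.factorial (2 * N + 1 - (k+1)) : ℂ) / (Nat.factorial (2 * N + 1) : ℂ)) *
          D (k+1)) = 0 := by
    rw [← Finset.sum_add_distrib]; exact hz
  have hlast : -(I * Ω / 2) * ((I * Ω) ^ N *
        ((Nat.factorial (2 * N + 1 - N) : ℂ) / (Nat.factorial (2 * N + 1) : ℂ)) *
        jacobiP (N - N) (N - N + 1) N s)
      = -((I * Ω) ^ (N + 1) / 2) *
          ((Nat.factorial (N + 1) : ℂ) / (Nat.factorial (2 * N + 1) : ℂ)) *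
          jacobiP 0 1 N s := by
    rw [show 2*N+1-N = N+1 from by omega, Nat.sub_self]; ring
  have hD0 : D 0 = 0 := rfl
  rw [hD0]
  linear_combination hzz + hlast
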